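/- The reversed hazard rate h(x) = f(x)/F(x) of a centered normal distribution with standard deviation σ > 0 is strictly decreasing on ℝ, where f and F are the normal density and distribution function. -/

import Mathlib

open MeasureTheory Real Set Filter

theorem normal_reversed_hazard_strictAnti (σ : ℝ) (hσ : 0 < σ) :
    let f : ℝ → ℝ := fun x =>
      (1 / (Real.sqrt (2 * Real.pi) * σ)) * Real.exp (-x ^ 2 / (2 * σ ^ 2))
    let F : ℝ → ℝ := fun x => ∫ t in Set.Iic x, f t
    StrictAnti (fun x => f x / F x) := by
  intro f F
  have hσ2 : (0:ℝ) < σ ^ 2 := by positivity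
  have hb : (0:ℝ) < 1 / (2 * σ ^ 2) := by positivity
  have hc : (0:ℝ) < 1 / (Real.sqrt (2 * Real.pi) * σ) := by
    have : (0:ℝ) < Real.sqrt (2 * Real.pi) := Real.sqrt_pos.2 (by positivity)
    positivity
  have hexp_eq : ∀ x : ℝ, -x ^ 2 / (2 * σ ^ 2) = -(1 / (2 * σ ^ 2)) * x ^ 2 := by
    intro x; field_simp
  have hf_pos : ∀ x, 0 < f x := fun x => mul_pos hc (Real.exp_pos _)
  have hf_cont : Continuous f := by
    apply Continuous.mul continuous_const
    exact Real.continuous_exp.comp (by fun_prop)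
  have hf_int : Integrable f := by
    apply Integrable.const_mul
    simp_rw [hexp_eq]
    exact integrable_exp_neg_mul_sq hb
  -- derivative of f
  have hf_deriv : ∀ x, HasDerivAt f (-(x / σ ^ 2) * f x) x := by
    intro x
    have h1 : HasDerivAt (fun y : ℝ => -y ^ 2 / (2 * σ ^ 2)) (-(x / σ ^ 2)) x := by
      have : HasDerivAt (fun y : ℝ => -y ^ 2 / (2 * σ ^ 2))
          ((-(2 * x ^ 1)) / (2 * σ ^ 2)) x := by
        exact ((hasDerivAt_pow 2 x).neg).div_const _
      convert this using 1
      field_simp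
    have h2 := (h1.exp).const_mul (1 / (Real.sqrt (2 * Real.pi) * σ))
    refine h2.congr_deriv ?_
    simp only [f]; ring
  -- the function t * f t is integrable
  have htf_int : Integrable (fun t => -(t / σ ^ 2) * f t) := by
    have h := ((integrable_mul_exp_neg_mul_sq hb).const_mul
      (-(1 / σ ^ 2) * (1 / (Real.sqrt (2 * Real.pi) * σ))))
    apply h.congr
    apply Filter.Eventually.of_forall
    intro t
    simp only [f, hexp_eq]
    ring
  -- f tends to 0 at -∞
  have hf_bot : Tendsto f atBot (nhds 0) := by
    have hsq : Tendsto (fun x : ℝ => x ^ 2) atBot atTop := by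
      have h2 := (tendsto_pow_atTop (n := 2) (by norm_num)).comp
        (tendsto_neg_atBot_atTop (G := ℝ))
      apply h2.congr
      intro x
      simp [Function.comp]
    have h1 : Tendsto (fun x : ℝ => -x ^ 2 / (2 * σ ^ 2)) atBot atBot := by
      apply Tendsto.atBot_div_const (by positivity)
      exact tendsto_neg_atTop_atBot.comp hsq
    have h3 := (Real.tendsto_exp_atBot.comp h1).const_mul (1 / (Real.sqrt (2 * Real.pi) * σ))
    rw [mul_zero] at h3
    exact h3
  -- FTC on Iic: ∫_{Iic x} f' = f x
  have hFTC : ∀ x, ∫ t in Iic x, (-(t / σ ^ 2) * f t) = f x := by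
    intro x
    rw [integral_Iic_of_hasDerivAt_of_tendsto' (fun t _ => hf_deriv t)
      htf_int.integrableOn hf_bot, sub_zero]
  -- F is positive
  have hF_pos : ∀ x, 0 < F x := by
    intro x
    rw [show F x = ∫ t in Iic x, f t from rfl,
      setIntegral_pos_iff_support_of_nonneg_ae
        (Filter.Eventually.of_forall fun t => (hf_pos t).le) hf_int.integrableOn]
    have : Function.support f ∩ Iic x = Iic x := by
      rw [Set.inter_eq_right]
      intro t _
      exact (hf_pos t).ne'
    rw [this, Real.volume_Iic]
    exact ENNReal.zero_lt_top
  -- F has derivative f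
  have hF_deriv : ∀ x, HasDerivAt F (f x) x := by
    intro x
    have heq : ∀ y, F y = F 0 + ∫ t in (0:ℝ)..y, f t := by
      intro y
      rw [← intervalIntegral.integral_Iic_sub_Iic hf_int.integrableOn hf_int.integrableOn]
      simp only [F]
      ring
    have h1 : HasDerivAt (fun y => F 0 + ∫ t in (0:ℝ)..y, f t) (f x) x := by
      apply HasDerivAt.const_add
      exact intervalIntegral.integral_hasDerivAt_right
        (hf_int.intervalIntegrable) (hf_cont.stronglyMeasurableAtFilter _ _)
        hf_cont.continuousAt
    exact h1.congr_of_eventuallyEq (Filter.Eventually.of_forall fun y => heq y)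
  -- key inequality : f x + (x/σ²) F x > 0
  have hkey : ∀ x, 0 < f x + (x / σ ^ 2) * F x := by
    intro x
    have hint2 : IntegrableOn (fun t => (x / σ ^ 2) * f t) (Iic x) :=
      (hf_int.const_mul _).integrableOn
    have hsum : f x + (x / σ ^ 2) * F x
        = ∫ t in Iic x, ((x - t) / σ ^ 2) * f t := by
      rw [← hFTC x, show (x / σ ^ 2) * F x = ∫ t in Iic x, (x / σ ^ 2) * f t by
        rw [integral_const_mul]]
      rw [← integral_add htf_int.integrableOn hint2]
      congr 1
      funext t
      ring
    rw [hsum]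
    rw [setIntegral_pos_iff_support_of_nonneg_ae]
    · have hsub : Iio x ⊆ Function.support (fun t => ((x - t) / σ ^ 2) * f t) ∩ Iic x := by
        intro t ht
        refine ⟨?_, le_of_lt (Set.mem_Iio.mp ht)⟩
        have : 0 < ((x - t) / σ ^ 2) * f t := by
          apply mul_pos _ (hf_pos t)
          have : 0 < x - t := by linarith [ht.out]
          positivity
        exact this.ne'
      refine lt_of_lt_of_le ?_ (measure_mono hsub)
      rw [Real.volume_Iio]
      exact ENNReal.zero_lt_top
    · rw [EventuallyLE, ae_restrict_iff' measurableSet_Iic]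
      apply Filter.Eventually.of_forall
      intro t ht
      have h1 : 0 ≤ x - t := by linarith [ht.out]
      have := (hf_pos t).le
      positivity
    · have hsum2 : Integrable (fun t => -(t / σ ^ 2) * f t + (x / σ ^ 2) * f t) :=
        htf_int.add (hf_int.const_mul _)
      exact (hsum2.congr (Filter.Eventually.of_forall fun t => by ring)).integrableOn
  -- conclude
  apply strictAnti_of_deriv_neg
  intro x
  have hd : HasDerivAt (fun y => f y / F y)
      ((-(x / σ ^ 2) * f x * F x - f x * f x) / (F x) ^ 2) x :=
    (hf_deriv x).div (hF_deriv x) (hF_pos x).ne'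
  rw [hd.deriv]
  apply div_neg_of_neg_of_pos
  · have : -(x / σ ^ 2) * f x * F x - f x * f x
        = -(f x * (f x + (x / σ ^ 2) * F x)) := by ring
    rw [this, neg_neg_iff_pos]
    exact mul_pos (hf_pos x) (hkey x)
  · exact pow_pos (hF_pos x) 2
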